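/- arXiv:1105.5413 — 3 statements merged into one kernel-verified Lean document; each statement's English description precedes it below -/
import Mathlib

section
/- If W and W' are subsets of ℤ^d each possessing an affine stratification, then W ∩ W' possesses an affine stratification. -/
/-!
Intersecting two stratifications piece by piece reduces the claim to showing that
`(F + A) ∩ (F' + A')` is again a finitely generated module. Write `A`, `A'` as the images of
`φ : ℕⁿ → ℤ^d` and `ψ : ℕⁿ' → ℤ^d`; then `({a} + A) ∩ ({b} + A')` is the image of the solution set
of `a + φ m = b + ψ m'` in `ℕⁿ × ℕⁿ'`. By Dickson's lemma this solution set is its finitely many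
minimal elements plus the monoid of solutions of `φ m = ψ m'`, which is finitely generated by
Gordan's lemma and, crucially, does not depend on `(a, b)`.
-/

open Pointwise

/-- A finitely generated module over an affine semigroup: `W = F + A` with `F` finite and
`A` a finitely generated submonoid of `ℤ^d`. -/
def IsFGModule {d : ℕ} (W : Set (Fin d → ℤ)) : Prop :=
  ∃ (F : Set (Fin d → ℤ)) (A : AddSubmonoid (Fin d → ℤ)),
    F.Finite ∧ A.FG ∧ W = F + (A : Set (Fin d → ℤ))

/-- An affine stratification: a finite partition into finitely generated modules over
affine semigroups. -/
def HasAffineStratification {d : ℕ} (W : Set (Fin d → ℤ)) : Prop :=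
  ∃ (r : ℕ) (Wi : Fin r → Set (Fin d → ℤ)),
    Set.univ.PairwiseDisjoint Wi ∧ W = ⋃ i, Wi i ∧ ∀ i, IsFGModule (Wi i)

open Function

theorem Set.add_inter_add_eq_biUnion {α : Type*} [Add α] (s t s' t' : Set α) :
    (s + t) ∩ (s' + t') = ⋃ p ∈ s ×ˢ s', ({p.1} + t) ∩ ({p.2} + t') := by
  ext z
  simp only [Set.mem_inter_iff, Set.mem_iUnion₂]
  constructor
  · rintro ⟨⟨a, ha, x, hx, hz⟩, b, hb, y, hy, hz'⟩
    exact ⟨(a, b), ⟨ha, hb⟩, ⟨a, rfl, x, hx, hz⟩, b, rfl, y, hy, hz'⟩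
  · rintro ⟨⟨a, b⟩, ⟨ha, hb⟩, ⟨_, rfl, x, hx, hz⟩, _, rfl, y, hy, hz'⟩
    exact ⟨⟨_, ha, x, hx, hz⟩, _, hb, y, hy, hz'⟩

namespace AddMonoidHom

theorem singleton_add_mrange_inter_singleton_add_mrange {M M' N : Type*} [AddCommMonoid M]
    [AddCommMonoid M'] [AddCommMonoid N] (φ : M →+ N) (ψ : M' →+ N) (a b : N) :
    ({a} + (mrange φ : Set N)) ∩ ({b} + (mrange ψ : Set N)) =
      (fun x => a + φ.comp (fst M M') x) ''
        {x | a + φ.comp (fst M M') x = b + ψ.comp (snd M M') x} := by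
  simp only [Set.singleton_add]
  ext z
  constructor
  · rintro ⟨⟨_, ⟨m, rfl⟩, rfl⟩, ⟨_, ⟨m', rfl⟩, h⟩⟩
    exact ⟨(m, m'), h.symm, rfl⟩
  · rintro ⟨⟨m, m'⟩, h, rfl⟩
    exact ⟨⟨_, ⟨m, rfl⟩, rfl⟩, ⟨_, ⟨m', rfl⟩, h.symm⟩⟩

theorem exists_finite_setOfPred_add_eq_add_eq_add_eqLocusM {M N : Type*} [AddCommMonoid M]
    [PartialOrder M] [WellQuasiOrderedLE M] [CanonicallyOrderedAdd M] [AddCommMonoid N]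
    [IsLeftCancelAdd N] (f g : M →+ N) (a b : N) :
    ∃ E : Set M, E.Finite ∧ {x | a + f x = b + g x} = E + (f.eqLocusM g : Set M) := by
  set S := {x | a + f x = b + g x}
  have hpwo := Set.isPWO_of_wellQuasiOrderedLE S
  refine ⟨{x | Minimal (· ∈ S) x}, (setOfPred_minimal_antichain _).finite_of_partiallyWellOrderedOn
    (hpwo.mono (setOfPred_minimal_subset _)), Set.Subset.antisymm ?_ ?_⟩
  · intro x hx
    obtain ⟨e, hex, he⟩ := hpwo.exists_le_minimal hx
    obtain ⟨c, rfl⟩ := exists_add_of_le hex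
    have hx : a + f (e + c) = b + g (e + c) := hx
    have he' : a + f e = b + g e := he.prop
    refine ⟨e, he, c, mem_eqLocusM.2 (add_left_cancel (a := a + f e) ?_), rfl⟩
    calc a + f e + f c = b + g e + g c := by simpa only [map_add, add_assoc] using hx
      _ = a + f e + g c := by rw [he']
  · rintro _ ⟨e, he, c, hc, rfl⟩
    have hc : f c = g c := mem_eqLocusM.1 hc
    have he : a + f e = b + g e := he.prop
    show a + f (e + c) = b + g (e + c)
    rw [map_add, map_add, ← add_assoc, ← add_assoc, he, hc]

end AddMonoidHom

namespace AddSubmonoid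

variable {N : Type*} [AddCommMonoid N] [IsCancelAdd N]

theorem FG.exists_fg_forall_singleton_add_inter_eq_add {A A' : AddSubmonoid N} (hA : A.FG)
    (hA' : A'.FG) : ∃ B : AddSubmonoid N, B.FG ∧ ∀ a b : N,
      ∃ E : Set N, E.Finite ∧ ({a} + (A : Set N)) ∩ ({b} + (A' : Set N)) = E + B := by
  obtain ⟨n, φ, rfl⟩ := fg_iff_exists_fin_addMonoidHom.1 hA
  obtain ⟨n', ψ, rfl⟩ := fg_iff_exists_fin_addMonoidHom.1 hA'
  set f := φ.comp (AddMonoidHom.fst (Fin n → ℕ) (Fin n' → ℕ))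
  set g := ψ.comp (AddMonoidHom.snd (Fin n → ℕ) (Fin n' → ℕ))
  refine ⟨(f.eqLocusM g).map f, (fg_eqLocusM f g).map f, fun a b => ?_⟩
  obtain ⟨E, hE, hS⟩ := f.exists_finite_setOfPred_add_eq_add_eq_add_eqLocusM g a b
  refine ⟨(a + f ·) '' E, hE.image _, ?_⟩
  calc ({a} + (AddMonoidHom.mrange φ : Set N)) ∩ ({b} + (AddMonoidHom.mrange ψ : Set N))
      = (a + f ·) '' (E + (f.eqLocusM g : Set _)) := by
        rw [← hS, AddMonoidHom.singleton_add_mrange_inter_singleton_add_mrange]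
    _ = {a} + (f '' E + f '' (f.eqLocusM g : Set _)) := by
        rw [← Set.image_add, Set.singleton_add, Set.image_image]
    _ = (a + f ·) '' E + ((f.eqLocusM g).map f : Set N) := by
        rw [← add_assoc, Set.singleton_add, Set.image_image, coe_map]

theorem FG.exists_finite_add_fg_eq_inter {F F' : Set N} (hF : F.Finite)
    (hF' : F'.Finite) {A A' : AddSubmonoid N} (hA : A.FG) (hA' : A'.FG) :
    ∃ (E : Set N) (B : AddSubmonoid N), E.Finite ∧ B.FG ∧
      (F + (A : Set N)) ∩ (F' + (A' : Set N)) = E + B := by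
  obtain ⟨B, hB, hE⟩ := hA.exists_fg_forall_singleton_add_inter_eq_add hA'
  choose E hEfin hEeq using hE
  refine ⟨⋃ p ∈ F ×ˢ F', E p.1 p.2, B, (hF.prod hF').biUnion fun p _ => hEfin p.1 p.2, hB, ?_⟩
  rw [Set.iUnion₂_add, Set.add_inter_add_eq_biUnion]
  simp_rw [hEeq]

end AddSubmonoid

theorem pairwise_disjoint_on_prod_inf {α ι κ : Type*} [SemilatticeInf α] [OrderBot α]
    {f : ι → α} {g : κ → α} (hf : Pairwise (Disjoint on f)) (hg : Pairwise (Disjoint on g)) :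
    Pairwise (Disjoint on fun p : ι × κ => f p.1 ⊓ g p.2) := by
  rintro ⟨i, j⟩ ⟨i', j'⟩ hne
  by_cases hi : i = i'
  · subst hi
    exact (hg fun hj => hne (congrArg _ hj)).mono inf_le_right inf_le_right
  · exact (hf hi).mono inf_le_left inf_le_left

theorem IsFGModule.inter {d : ℕ} {W W' : Set (Fin d → ℤ)} (hW : IsFGModule W)
    (hW' : IsFGModule W') : IsFGModule (W ∩ W') := by
  obtain ⟨F, A, hF, hA, rfl⟩ := hW
  obtain ⟨F', A', hF', hA', rfl⟩ := hW'
  exact AddSubmonoid.FG.exists_finite_add_fg_eq_inter hF hF' hA hA'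

theorem hasAffineStratification_iUnion {d : ℕ} {ι : Type*} [Finite ι]
    (Wi : ι → Set (Fin d → ℤ)) (hdisj : Pairwise (Disjoint on Wi)) (hWi : ∀ i, IsFGModule (Wi i)) :
    HasAffineStratification (⋃ i, Wi i) := by
  let e := Finite.equivFin ι
  refine ⟨Nat.card ι, Wi ∘ e.symm, fun i _ j _ hij => hdisj (e.symm.injective.ne hij), ?_,
    fun i => hWi _⟩
  exact (e.symm.surjective.iUnion_comp Wi).symm

/-- If `W` and `W'` possess affine stratifications, so does `W ∩ W'`. -/
theorem hasAffineStratification_inter {d : ℕ} (W W' : Set (Fin d → ℤ))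
    (hW : HasAffineStratification W) (hW' : HasAffineStratification W') :
    HasAffineStratification (W ∩ W') := by
  obtain ⟨r, Wi, hdisj, rfl, hWi⟩ := hW
  obtain ⟨r', Wi', hdisj', rfl, hWi'⟩ := hW'
  rw [Set.iUnion_inter_iUnion, ← Set.iUnion_prod' fun p => Wi p.1 ∩ Wi' p.2]
  exact hasAffineStratification_iUnion _
    (pairwise_disjoint_on_prod_inf (Set.pairwise_univ.1 hdisj) (Set.pairwise_univ.1 hdisj'))
    fun p => (hWi p.1).inter (hWi' p.2)
end

section
/- The intersection of a translate a₁ + A₁ of a normal affine semigroup A₁ with a translate a₂ + A₂ of a normal affine semigroup A₂ in ℤ^d is a finitely generated module over an affine semigroup (in particular it possesses an affine stratification). -/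
open Pointwise

/-- A normal affine semigroup: finitely generated and saturated in the group it
generates (equivalently, the intersection of a rational cone with a lattice). -/
def IsNormalAffineSemigroup {d : ℕ} (A : AddSubmonoid (Fin d → ℤ)) : Prop :=
  A.FG ∧ ∀ x : Fin d → ℤ, x ∈ AddSubgroup.closure (A : Set (Fin d → ℤ)) →
    (∃ n : ℕ, 0 < n ∧ n • x ∈ A) → x ∈ A

/-!
Write `A₁` and `A₂` as images of `ℕ^{n₁}` and `ℕ^{n₂}`. The intersection of the translates is the
image of the solution set of `a₁ + f₁ x = a₂ + f₂ y` in `ℕ^{n₁} × ℕ^{n₂}`. Every solution lies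
above a minimal one and differs from it by a solution of the homogeneous equation `f₁ x = f₂ y`.
By Dickson's lemma there are only finitely many minimal solutions, and by Gordan's lemma the
homogeneous solutions form a finitely generated monoid.
-/

theorem AddSubmonoid.FG.exists_mrange_eq {N : Type*} [AddCommMonoid N] {A : AddSubmonoid N}
    (hA : A.FG) : ∃ (n : ℕ) (f : (Fin n → ℕ) →+ N), AddMonoidHom.mrange f = A := by
  obtain ⟨n, v, hv⟩ := Submodule.fg_iff_exists_fin_generating_family.mp
    ((Submodule.fg_iff_addSubmonoid_fg A.toNatSubmodule).mpr hA)
  refine ⟨n, (Fintype.linearCombination ℕ v : (Fin n → ℕ) →+ N), ?_⟩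
  rw [← A.toNatSubmodule_toAddSubmonoid, ← hv, ← Fintype.range_linearCombination]
  rfl

theorem finite_setOf_minimal {M : Type*} [PartialOrder M] [WellQuasiOrderedLE M] (S : Set M) :
    {x | Minimal (· ∈ S) x}.Finite :=
  WellQuasiOrderedLE.finite_of_isAntichain (setOfPred_minimal_antichain _)

theorem eq_setOf_minimal_add_of_add_mem_iff {M : Type*} [AddCommMonoid M] [Preorder M]
    [WellFoundedLT M] [ExistsAddOfLE M] {S : Set M} {P : AddSubmonoid M}
    (h : ∀ x ∈ S, ∀ y, x + y ∈ S ↔ y ∈ P) : S = {x | Minimal (· ∈ S) x} + (P : Set M) := by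
  ext x
  constructor
  · intro hx
    obtain ⟨m, hmx, hm⟩ := exists_minimal_le_of_wellFoundedLT (· ∈ S) x hx
    obtain ⟨y, rfl⟩ := exists_add_of_le hmx
    exact ⟨m, hm, y, (h m hm.prop y).mp hx, rfl⟩
  · rintro ⟨m, hm, y, hy, rfl⟩
    exact (h m hm.prop y).mpr hy

theorem setOf_add_eq_add_eq_minimal_add_eqLocusM {M N : Type*} [AddCommMonoid M] [Preorder M]
    [WellFoundedLT M] [ExistsAddOfLE M] [AddCommMonoid N] [IsLeftCancelAdd N]
    (f g : M →+ N) (b₁ b₂ : N) :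
    {x | b₁ + f x = b₂ + g x} =
      {x | Minimal (· ∈ {x | b₁ + f x = b₂ + g x}) x} + (f.eqLocusM g : Set M) := by
  refine eq_setOf_minimal_add_of_add_mem_iff fun x (hx : b₁ + f x = b₂ + g x) y => ?_
  change b₁ + f (x + y) = b₂ + g (x + y) ↔ f y = g y
  rw [map_add, map_add, ← add_assoc, ← add_assoc, hx, add_right_inj]

theorem vadd_mrange_inter_vadd_mrange {M₁ M₂ N : Type*} [AddCommMonoid M₁] [AddCommMonoid M₂]
    [AddCommMonoid N] (f₁ : M₁ →+ N) (f₂ : M₂ →+ N) (a₁ a₂ : N) :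
    (a₁ +ᵥ (AddMonoidHom.mrange f₁ : Set N)) ∩ (a₂ +ᵥ (AddMonoidHom.mrange f₂ : Set N)) =
      a₁ +ᵥ (f₁.comp (AddMonoidHom.fst M₁ M₂)) ''
        {x | a₁ + f₁.comp (AddMonoidHom.fst M₁ M₂) x =
          a₂ + f₂.comp (AddMonoidHom.snd M₁ M₂) x} := by
  ext z
  simp only [Set.mem_inter_iff, Set.mem_vadd_set, AddMonoidHom.coe_mrange, Set.mem_range,
    Set.mem_image, Set.mem_ofPred_eq, AddMonoidHom.coe_comp, AddMonoidHom.coe_fst,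
    AddMonoidHom.coe_snd, Function.comp_apply, Prod.exists, vadd_eq_add]
  constructor
  · rintro ⟨⟨_, ⟨x, rfl⟩, rfl⟩, _, ⟨y, rfl⟩, hz⟩
    exact ⟨_, ⟨x, y, hz.symm, rfl⟩, rfl⟩
  · rintro ⟨_, ⟨x, y, hxy, rfl⟩, rfl⟩
    exact ⟨⟨_, ⟨x, rfl⟩, rfl⟩, _, ⟨y, rfl⟩, hxy.symm⟩

theorem isFGModule_vadd_image_add {d : ℕ} {M : Type*} [AddCommMonoid M]
    (f : M →+ (Fin d → ℤ)) {F : Set M} {P : AddSubmonoid M} (hF : F.Finite) (hP : P.FG)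
    (a : Fin d → ℤ) : IsFGModule (a +ᵥ f '' (F + (P : Set M))) :=
  ⟨a +ᵥ f '' F, P.map f, (hF.image f).vadd_set, hP.map f, by
    rw [Set.image_add, AddSubmonoid.coe_map, vadd_add_assoc]⟩

theorem isFGModule_vadd_inter_vadd {d : ℕ} {A₁ A₂ : AddSubmonoid (Fin d → ℤ)}
    (h₁ : A₁.FG) (h₂ : A₂.FG) (a₁ a₂ : Fin d → ℤ) :
    IsFGModule ((a₁ +ᵥ (A₁ : Set (Fin d → ℤ))) ∩ (a₂ +ᵥ (A₂ : Set (Fin d → ℤ)))) := by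
  obtain ⟨n₁, f₁, rfl⟩ := h₁.exists_mrange_eq
  obtain ⟨n₂, f₂, rfl⟩ := h₂.exists_mrange_eq
  rw [vadd_mrange_inter_vadd_mrange, setOf_add_eq_add_eq_minimal_add_eqLocusM]
  exact isFGModule_vadd_image_add _ (finite_setOf_minimal _) (AddSubmonoid.fg_eqLocusM _ _) a₁

theorem IsFGModule.hasAffineStratification {d : ℕ} {W : Set (Fin d → ℤ)} (hW : IsFGModule W) :
    HasAffineStratification W :=
  ⟨1, fun _ => W, fun i _ j _ hij => absurd (Subsingleton.elim i j) hij,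
    (Set.iUnion_const W).symm, fun _ => hW⟩

/-- The intersection of translates of two normal affine semigroups is a
finitely generated module over an affine semigroup; in particular it possesses an affine
stratification. -/
theorem inter_translates_normal_isFGModule {d : ℕ}
    (A₁ A₂ : AddSubmonoid (Fin d → ℤ))
    (h₁ : IsNormalAffineSemigroup A₁) (h₂ : IsNormalAffineSemigroup A₂)
    (a₁ a₂ : Fin d → ℤ) :
    IsFGModule ((a₁ +ᵥ (A₁ : Set (Fin d → ℤ))) ∩ (a₂ +ᵥ (A₂ : Set (Fin d → ℤ)))) ∧
    HasAffineStratification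
      ((a₁ +ᵥ (A₁ : Set (Fin d → ℤ))) ∩ (a₂ +ᵥ (A₂ : Set (Fin d → ℤ)))) :=
  have hmod := isFGModule_vadd_inter_vadd h₁.1 h₂.1 a₁ a₂
  ⟨hmod, hmod.hasAffineStratification⟩
end

section
/- The set of integer points of a rational convex polyhedron in ℝ^d intersected with a coset of a subgroup of ℤ^d is a finitely generated module over an affine semigroup, namely over the semigroup of lattice points of the recession cone. -/
/-!
Measure a point `p` of the polyhedron `{p ∈ a + L | φ p ≤ c}` by its slack vector
`c - φ p ∈ ℕⁿ`. By Dickson's lemma there are finitely many points `F` of the polyhedron such that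
every slack vector lies above the slack of some `q ∈ F`. Then `φ (p - q) ≤ 0` and `p - q ∈ L`,
so `p` is `q` plus a lattice point of the recession cone.
-/

open Pointwise

theorem Set.exists_finite_subset_forall_exists_le {α : Type*} [PartialOrder α]
    [WellQuasiOrderedLE α] (s : Set α) : ∃ t ⊆ s, t.Finite ∧ ∀ x ∈ s, ∃ y ∈ t, y ≤ x := by
  have hpwo := Set.isPWO_of_wellQuasiOrderedLE s
  refine ⟨_, setOfPred_minimal_subset s,
    (setOfPred_minimal_antichain _).finite_of_partiallyWellOrderedOn
      (hpwo.mono (setOfPred_minimal_subset s)), fun x hx => ?_⟩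
  obtain ⟨y, hyx, hy⟩ := hpwo.exists_le_minimal hx
  exact ⟨y, hy, hyx⟩

theorem Set.exists_finite_subset_forall_exists_comp_le {α β : Type*} [PartialOrder α]
    [WellQuasiOrderedLE α] (f : β → α) (s : Set β) :
    ∃ t ⊆ s, t.Finite ∧ ∀ x ∈ s, ∃ y ∈ t, f y ≤ f x := by
  obtain ⟨t, hts, htf, ht⟩ := Set.exists_subset_image_finite_and.1
    ((f '' s).exists_finite_subset_forall_exists_le)
  refine ⟨t, hts, htf, fun x hx => ?_⟩
  obtain ⟨_, ⟨y, hy, rfl⟩, hyx⟩ := ht (f x) ⟨x, hx, rfl⟩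
  exact ⟨y, hy, hyx⟩

theorem Set.exists_finite_subset_forall_exists_comp_ge_of_le {β ι : Type*} [Finite ι]
    (f : β → ι → ℤ) (c : ι → ℤ) (s : Set β) (hs : ∀ x ∈ s, f x ≤ c) :
    ∃ t ⊆ s, t.Finite ∧ ∀ x ∈ s, ∃ y ∈ t, f x ≤ f y := by
  obtain ⟨t, hts, htf, ht⟩ :=
    s.exists_finite_subset_forall_exists_comp_le (fun x i => (c i - f x i).toNat)
  refine ⟨t, hts, htf, fun x hx => ?_⟩
  obtain ⟨y, hy, hyx⟩ := ht x hx
  refine ⟨y, hy, fun i => ?_⟩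
  have hxi : f x i ≤ c i := hs x hx i
  have hyi : f y i ≤ c i := hs y (hts hy) i
  have hslack : (c i - f y i).toNat ≤ (c i - f x i).toNat := hyx i
  change f x i ≤ f y i
  omega

section

variable {G ι : Type*} [AddCommGroup G]

def recessionCone (L : AddSubgroup G) (φ : G →+ ι → ℤ) : AddSubmonoid G where
  carrier := {p | p ∈ L ∧ φ p ≤ 0}
  zero_mem' := ⟨L.zero_mem, by simp⟩
  add_mem' := fun ⟨hpL, hp⟩ ⟨hqL, hq⟩ => ⟨L.add_mem hpL hqL, by simpa using add_nonpos hp hq⟩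

theorem exists_finite_eq_add_recessionCone [Finite ι] (L : AddSubgroup G) (φ : G →+ ι → ℤ)
    (a : G) (c : ι → ℤ) :
    ∃ F : Set G, F.Finite ∧
      {p | p ∈ a +ᵥ (L : Set G) ∧ φ p ≤ c} = F + (recessionCone L φ : Set G) := by
  obtain ⟨F, hFP, hFfin, hF⟩ :=
    Set.exists_finite_subset_forall_exists_comp_ge_of_le φ c {p | p ∈ a +ᵥ (L : Set G) ∧ φ p ≤ c}
      fun _ hp => hp.2
  refine ⟨F, hFfin, Set.Subset.antisymm ?_ ?_⟩
  · rintro p hp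
    obtain ⟨q, hqF, hpq⟩ := hF p hp
    have hpa := (mem_leftAddCoset_iff a).1 hp.1
    have hqa := (mem_leftAddCoset_iff a).1 (hFP hqF).1
    refine ⟨q, hqF, p - q, ⟨?_, by simpa using hpq⟩, add_sub_cancel q p⟩
    simpa using L.sub_mem hpa hqa
  · rintro _ ⟨q, hqF, r, ⟨hrL, hr⟩, rfl⟩
    obtain ⟨hqa, hqc⟩ := hFP hqF
    refine ⟨(mem_leftAddCoset_iff a).2 ?_, by simpa using add_le_add hqc hr⟩
    simpa [add_assoc] using L.add_mem ((mem_leftAddCoset_iff a).1 hqa) hrL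

end

/-- The set of integer points of a rational convex polyhedron
`{x : ∀ i, ⟨u i, x⟩ ≤ c i}` intersected with a coset `a + L` of a subgroup `L ≤ ℤ^d` is a
finitely generated module over the affine semigroup of lattice points (in `L`) of the
recession cone `{x : ∀ i, ⟨u i, x⟩ ≤ 0}`. -/
theorem polyhedron_coset_points_isFGModule {d n : ℕ}
    (u : Fin n → Fin d → ℤ) (c : Fin n → ℤ)
    (L : AddSubgroup (Fin d → ℤ)) (a : Fin d → ℤ) :
    ∃ A : AddSubmonoid (Fin d → ℤ),
      (A : Set (Fin d → ℤ)) = {p : Fin d → ℤ | p ∈ L ∧ ∀ i, ∑ j, u i j * p j ≤ 0} ∧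
      ∃ F : Set (Fin d → ℤ), F.Finite ∧
        {p : Fin d → ℤ | p ∈ a +ᵥ (L : Set (Fin d → ℤ)) ∧ ∀ i, ∑ j, u i j * p j ≤ c i}
          = F + (A : Set (Fin d → ℤ)) := by
  obtain ⟨F, hFfin, hF⟩ :=
    exists_finite_eq_add_recessionCone L (Matrix.mulVecLin u).toAddMonoidHom a c
  exact ⟨recessionCone L (Matrix.mulVecLin u).toAddMonoidHom, rfl, F, hFfin, hF⟩
end
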